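/- Define v(x,y) = 1/(2(y+1)²) + 1/(2(y+1)³) + 1/(4(y+1)⁴) + (y−1)/(2(x+y)²) − (y+2)/(2(x+y+1)²). For every fixed y > 0, the function x ↦ v(x,y) is strictly increasing on (0,∞). -/

import Mathlib

noncomputable def v (x y : ℝ) : ℝ :=
  1 / (2 * (y + 1) ^ 2) + 1 / (2 * (y + 1) ^ 3) + 1 / (4 * (y + 1) ^ 4) +
    (y - 1) / (2 * (x + y) ^ 2) - (y + 2) / (2 * (x + y + 1) ^ 2)

/-!
Writing `s = x + y`, the derivative of `x ↦ v x y` is `(y + 2) / (s + 1) ^ 3 - (y - 1) / s ^ 3`,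
whose numerator `(y + 2) s³ - (y - 1) (s + 1)³` equals `3 x (s² + s + 1) + 2 y + 1`, which is
positive for `x ≥ 0` and `y > -1/2`.
-/

lemma hasDerivAt_v {x y : ℝ} (hs : 0 < x + y) :
    HasDerivAt (fun x => v x y) ((y + 2) / (x + y + 1) ^ 3 - (y - 1) / (x + y) ^ 3) x := by
  have hs₁ : 0 < x + y + 1 := by linarith
  have hsum : HasDerivAt (fun x => x + y) 1 x := (hasDerivAt_id x).add_const y
  have hA := (hasDerivAt_const x (y - 1)).fun_div ((hsum.fun_pow 2).const_mul 2) (by positivity)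
  have hB := (hasDerivAt_const x (y + 2)).fun_div
    (((hsum.add_const 1).fun_pow 2).const_mul 2) (by positivity)
  refine ((hA.const_add
    (1 / (2 * (y + 1) ^ 2) + 1 / (2 * (y + 1) ^ 3) + 1 / (4 * (y + 1) ^ 4))).sub hB).congr_deriv ?_
  field_simp
  ring

lemma cube_numerator_eq (x y : ℝ) :
    (y + 2) * (x + y) ^ 3 - (y - 1) * (x + y + 1) ^ 3
      = 3 * x * ((x + y) ^ 2 + (x + y) + 1) + 2 * y + 1 := by
  ring

lemma deriv_v_pos {x y : ℝ} (hx : 0 ≤ x) (hy : -1 / 2 < y) (hs : 0 < x + y) :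
    0 < (y + 2) / (x + y + 1) ^ 3 - (y - 1) / (x + y) ^ 3 := by
  have hs₁ : 0 < x + y + 1 := by linarith
  rw [div_sub_div _ _ (by positivity) (by positivity)]
  apply div_pos _ (by positivity)
  have hnum := cube_numerator_eq x y
  have hgrowth : 0 ≤ 3 * x * ((x + y) ^ 2 + (x + y) + 1) := by positivity
  linarith

theorem stmt_8 (y : ℝ) (hy : 0 < y) :
    StrictMonoOn (fun x => v x y) (Set.Ioi 0) := by
  have hderiv : ∀ x ∈ Set.Ioi (0 : ℝ),
      HasDerivAt (fun x => v x y) ((y + 2) / (x + y + 1) ^ 3 - (y - 1) / (x + y) ^ 3) x :=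
    fun x (hx : 0 < x) => hasDerivAt_v (by linarith)
  refine strictMonoOn_of_deriv_pos (convex_Ioi 0)
    (fun x hx => (hderiv x hx).continuousAt.continuousWithinAt) fun x hx => ?_
  rw [interior_Ioi, Set.mem_Ioi] at hx
  rw [(hderiv x hx).deriv]
  exact deriv_v_pos hx.le (by linarith) (by linarith)
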